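/- Let G be a finite connected simple graph with maximum degree d_M, diameter D, and fix κ_0 ∈ ℝ. Set I_{κ_0} = ∑_{xy∈E} max{0, κ_0 − κ_LLY(x,y)}. Then the number of vertices n of G satisfies n ≤ 1 + ∑_{k=1}^{D} d_M^k ∏_{i=1}^{k-1} (1 + (I_{κ_0} − i·κ_0)/2). -/

import Mathlib

open Finset

/-- A probability measure on a finite set, given as a density. -/
def IsProbMeasure {V : Type*} [Fintype V] (m : V → ℝ) : Prop :=
  (∀ x, 0 ≤ m x) ∧ ∑ x, m x = 1

/-- A coupling between two probability measures on a finite set. -/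
def IsCoupling {V : Type*} [Fintype V] (A : V × V → ℝ) (m₁ m₂ : V → ℝ) : Prop :=
  (∀ p, 0 ≤ A p) ∧ (∀ x, ∑ y, A (x, y) = m₁ x) ∧ (∀ y, ∑ x, A (x, y) = m₂ y)

/-- The Wasserstein-1 (transportation) distance between two probability measures on a
finite set, with respect to a cost `d`. -/
noncomputable def W {V : Type*} [Fintype V] (d : V → V → ℝ) (m₁ m₂ : V → ℝ) : ℝ :=
  sInf {c | ∃ A, IsCoupling A m₁ m₂ ∧ c = ∑ p : V × V, A p * d p.1 p.2}

lemma W_symm {V : Type*} [Fintype V] (d : V → V → ℝ) (hd : ∀ x y, d x y = d y x)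
    (m₁ m₂ : V → ℝ) : W d m₁ m₂ = W d m₂ m₁ := by
  have key : ∀ m₁ m₂ : V → ℝ,
      {c | ∃ A, IsCoupling A m₁ m₂ ∧ c = ∑ p : V × V, A p * d p.1 p.2} ⊆
      {c | ∃ A, IsCoupling A m₂ m₁ ∧ c = ∑ p : V × V, A p * d p.1 p.2} := by
    rintro m₁ m₂ c ⟨A, ⟨h0, h1, h2⟩, rfl⟩
    refine ⟨fun p => A (p.2, p.1), ⟨fun p => h0 _, fun x => h2 x, fun y => h1 y⟩, ?_⟩
    refine Fintype.sum_equiv (Equiv.prodComm V V) _ _ ?_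
    intro p
    simp [Equiv.prodComm, hd p.1 p.2]
  unfold W
  congr 1
  exact Set.Subset.antisymm (key m₁ m₂) (key m₂ m₁)

/-- The `α`-lazy random walk measure at a vertex `x` of a graph. -/
noncomputable def lazyWalk {V : Type*} [Fintype V] [DecidableEq V] (G : SimpleGraph V)
    [DecidableRel G.Adj] (α : ℝ) (x : V) : V → ℝ :=
  fun v => if v = x then α else if G.Adj x v then (1 - α) / (G.degree x) else 0

/-- The `α`-Ricci curvature `κ_α(x,y) = 1 - W(m_x^α, m_y^α)/d(x,y)`. -/
noncomputable def kappaAlpha {V : Type*} [Fintype V] [DecidableEq V] (G : SimpleGraph V)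
    [DecidableRel G.Adj] (α : ℝ) (x y : V) : ℝ :=
  1 - W (fun a b => (G.dist a b : ℝ)) (lazyWalk G α x) (lazyWalk G α y) / (G.dist x y)

lemma kappaAlpha_symm {V : Type*} [Fintype V] [DecidableEq V] (G : SimpleGraph V)
    [DecidableRel G.Adj] (α : ℝ) (x y : V) :
    kappaAlpha G α x y = kappaAlpha G α y x := by
  unfold kappaAlpha
  rw [W_symm _ (fun a b => by rw [SimpleGraph.dist_comm]),
    SimpleGraph.dist_comm]

/-- The Lin–Lu–Yau Ricci curvature `κ_LLY(x,y) = lim_{α → 1⁻} κ_α(x,y)/(1-α)`. -/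
noncomputable def kappaLLY {V : Type*} [Fintype V] [DecidableEq V] (G : SimpleGraph V)
    [DecidableRel G.Adj] (x y : V) : ℝ :=
  Filter.limUnder (nhdsWithin 1 (Set.Ico (0:ℝ) 1)) (fun α => kappaAlpha G α x y / (1 - α))

lemma kappaLLY_symm {V : Type*} [Fintype V] [DecidableEq V] (G : SimpleGraph V)
    [DecidableRel G.Adj] (x y : V) : kappaLLY G x y = kappaLLY G y x := by
  unfold kappaLLY
  congr 1
  funext α
  rw [kappaAlpha_symm]

/-- Integral `α`-Ricci curvature `I^α_{κ₀}`: total amount of `α`-Ricci curvature below the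
threshold `(1-α)κ₀`, summed over the edges of `G`. -/
noncomputable def IAlpha {V : Type*} [Fintype V] [DecidableEq V] (G : SimpleGraph V)
    [DecidableRel G.Adj] (α κ₀ : ℝ) : ℝ :=
  ∑ e ∈ G.edgeFinset,
    Sym2.lift ⟨fun x y => max 0 ((1 - α) * κ₀ - kappaAlpha G α x y),
      fun x y => by simp only []; rw [kappaAlpha_symm]⟩ e

/-- Integral Lin–Lu–Yau Ricci curvature `I_{κ₀}`: total amount of Lin–Lu–Yau Ricci curvature
below the threshold `κ₀`, summed over the edges of `G`. -/
noncomputable def ILLY {V : Type*} [Fintype V] [DecidableEq V] (G : SimpleGraph V)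
    [DecidableRel G.Adj] (κ₀ : ℝ) : ℝ :=
  ∑ e ∈ G.edgeFinset,
    Sym2.lift ⟨fun x y => max 0 (κ₀ - kappaLLY G x y),
      fun x y => by simp only []; rw [kappaLLY_symm]⟩ e

/-- The diameter of a finite graph. -/
noncomputable def gDiam {V : Type*} [Fintype V] (G : SimpleGraph V) : ℕ :=
  Finset.univ.sup fun p : V × V => G.dist p.1 p.2

/-!
Fix `x₀` and put `f = d(x₀, ·)`. Testing the Wasserstein distance with the 1-Lipschitz function
`f` gives `κ_LLY(z, y) ≤ Δf(z) - Δf(y)` on every edge with `f y = f z + 1`, and summing this along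
a geodesic from `x₀` to a vertex `y` of the sphere `S_k` yields `Δf(y) ≤ 1 + I_{κ₀} - k κ₀`. Since
every neighbour of `y` changes `f` by at most one, `y` has at most `deg y (1 + Δf(y)) / 2`
neighbours in `S_{k+1}`, whence `|S_{k+1}| ≤ |S_k| d_M (1 + (I_{κ₀} - k κ₀) / 2)`. Induction on
`k` and summing over the spheres give the bound.
-/

open Filter Topology

section Transport

variable {V : Type*} [Fintype V] {d : V → V → ℝ} {m₁ m₂ n₁ n₂ : V → ℝ} {A B : V × V → ℝ}

lemma IsProbMeasure.isCoupling_prod (h₁ : IsProbMeasure m₁) (h₂ : IsProbMeasure m₂) :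
    IsCoupling (fun p => m₁ p.1 * m₂ p.2) m₁ m₂ :=
  ⟨fun p => mul_nonneg (h₁.1 _) (h₂.1 _), fun x => by simp only [← mul_sum, h₂.2, mul_one],
    fun y => by simp only [← sum_mul, h₁.2, one_mul]⟩

lemma IsCoupling.mul_add_mul (hA : IsCoupling A m₁ m₂) (hB : IsCoupling B n₁ n₂) {s t : ℝ}
    (hs : 0 ≤ s) (ht : 0 ≤ t) :
    IsCoupling (fun p => s * A p + t * B p) (fun v => s * m₁ v + t * n₁ v)
      (fun v => s * m₂ v + t * n₂ v) :=
  ⟨fun p => add_nonneg (mul_nonneg hs (hA.1 p)) (mul_nonneg ht (hB.1 p)),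
    fun x => by simp only [sum_add_distrib, ← mul_sum, hA.2.1, hB.2.1],
    fun y => by simp only [sum_add_distrib, ← mul_sum, hA.2.2, hB.2.2]⟩

lemma IsCoupling.sum_mul_fst (hA : IsCoupling A m₁ m₂) (f : V → ℝ) :
    ∑ p : V × V, A p * f p.1 = ∑ v, m₁ v * f v := by
  simp only [Fintype.sum_prod_type, ← sum_mul, hA.2.1]

lemma IsCoupling.sum_mul_snd (hA : IsCoupling A m₁ m₂) (f : V → ℝ) :
    ∑ p : V × V, A p * f p.2 = ∑ v, m₂ v * f v := by
  rw [Fintype.sum_prod_type, sum_comm]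
  simp only [← sum_mul, hA.2.2]

lemma W_le_cost (hd : ∀ a b, 0 ≤ d a b) (hA : IsCoupling A m₁ m₂) :
    W d m₁ m₂ ≤ ∑ p : V × V, A p * d p.1 p.2 := by
  refine csInf_le ⟨0, ?_⟩ ⟨A, hA, rfl⟩
  rintro c ⟨A, hA, rfl⟩
  exact sum_nonneg fun p _ => mul_nonneg (hA.1 p) (hd _ _)

lemma le_W_of_forall_le_cost (h₁ : IsProbMeasure m₁) (h₂ : IsProbMeasure m₂) {c : ℝ}
    (hc : ∀ A, IsCoupling A m₁ m₂ → c ≤ ∑ p : V × V, A p * d p.1 p.2) : c ≤ W d m₁ m₂ :=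
  le_csInf ⟨_, _, h₁.isCoupling_prod h₂, rfl⟩ fun _ ⟨A, hA, hc'⟩ => hc'.symm ▸ hc A hA

lemma sub_le_W (h₁ : IsProbMeasure m₁) (h₂ : IsProbMeasure m₂) {f : V → ℝ}
    (hf : ∀ a b, f b - f a ≤ d a b) :
    ∑ v, m₂ v * f v - ∑ v, m₁ v * f v ≤ W d m₁ m₂ := by
  refine le_W_of_forall_le_cost h₁ h₂ fun A hA => ?_
  rw [← hA.sum_mul_snd, ← hA.sum_mul_fst, ← sum_sub_distrib]
  exact sum_le_sum fun p _ => by rw [← mul_sub]; exact mul_le_mul_of_nonneg_left (hf _ _) (hA.1 p)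

lemma W_mul_add_mul_le (hd : ∀ a b, 0 ≤ d a b) (h₁ : IsProbMeasure m₁) (h₂ : IsProbMeasure m₂)
    (hB : IsCoupling B n₁ n₂) {s t : ℝ} (hs : 0 < s) (ht : 0 ≤ t) :
    W d (fun v => s * m₁ v + t * n₁ v) (fun v => s * m₂ v + t * n₂ v)
      ≤ s * W d m₁ m₂ + t * ∑ p : V × V, B p * d p.1 p.2 := by
  have hlow : (W d (fun v => s * m₁ v + t * n₁ v) (fun v => s * m₂ v + t * n₂ v)
      - t * ∑ p : V × V, B p * d p.1 p.2) / s ≤ W d m₁ m₂ := by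
    refine le_W_of_forall_le_cost h₁ h₂ fun A hA => ?_
    rw [div_le_iff₀' hs, sub_le_iff_le_add]
    refine (W_le_cost hd (hA.mul_add_mul hB hs.le ht)).trans_eq ?_
    simp only [add_mul, mul_assoc, sum_add_distrib, ← mul_sum]
  rw [div_le_iff₀' hs] at hlow
  linarith

end Transport

section Laplacian

variable {V : Type*} [Fintype V] (G : SimpleGraph V) [DecidableRel G.Adj]

noncomputable def normalizedLaplacian (f : V → ℝ) (x : V) : ℝ :=
  (∑ y ∈ G.neighborFinset x, (f y - f x)) / G.degree x

variable {G}

lemma degree_mul_normalizedLaplacian (f : V → ℝ) (x : V) :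
    G.degree x * normalizedLaplacian G f x = ∑ y ∈ G.neighborFinset x, (f y - f x) := by
  rcases (G.degree x).eq_zero_or_pos with h | h
  · have hN : G.neighborFinset x = ∅ := by rwa [← card_eq_zero, G.card_neighborFinset_eq_degree]
    simp [hN, h]
  · exact mul_div_cancel₀ _ (by positivity)

lemma normalizedLaplacian_const (c : ℝ) (x : V) : normalizedLaplacian G (fun _ => c) x = 0 := by
  simp [normalizedLaplacian]

end Laplacian

lemma sub_le_one_of_adj {V : Type*} {G : SimpleGraph V} {f : V → ℝ}
    (hf : ∀ a b, f b - f a ≤ G.dist a b) {a b : V} (h : G.Adj a b) : f b - f a ≤ 1 := by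
  simpa [SimpleGraph.dist_eq_one_iff_adj.2 h] using hf a b

section LipschitzLaplacian

variable {V : Type*} [Fintype V] {G : SimpleGraph V} [DecidableRel G.Adj] {f : V → ℝ}

lemma normalizedLaplacian_le_one (hf : ∀ a b, f b - f a ≤ G.dist a b) (x : V) :
    normalizedLaplacian G f x ≤ 1 := by
  refine div_le_one_of_le₀ ?_ (Nat.cast_nonneg _)
  calc ∑ y ∈ G.neighborFinset x, (f y - f x)
      ≤ ∑ _y ∈ G.neighborFinset x, (1 : ℝ) :=
        sum_le_sum fun y hy => sub_le_one_of_adj hf ((G.mem_neighborFinset x y).1 hy)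
    _ = G.degree x := by simp

lemma neg_one_le_normalizedLaplacian (hf : ∀ a b, f b - f a ≤ G.dist a b) (x : V) :
    -1 ≤ normalizedLaplacian G f x := by
  rcases (G.degree x).eq_zero_or_pos with h | h
  · simp [normalizedLaplacian, h]
  rw [normalizedLaplacian, le_div_iff₀ (by positivity)]
  calc -1 * (G.degree x : ℝ) = ∑ _y ∈ G.neighborFinset x, (-1 : ℝ) := by simp
    _ ≤ ∑ y ∈ G.neighborFinset x, (f y - f x) :=
        sum_le_sum fun y hy => by
          linarith [sub_le_one_of_adj hf ((G.mem_neighborFinset x y).1 hy).symm]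

lemma card_filter_le_normalizedLaplacian (hf : ∀ a b, f b - f a ≤ G.dist a b) (x : V) :
    (#{y ∈ G.neighborFinset x | f y = f x + 1} : ℝ)
      ≤ G.degree x * (1 + normalizedLaplacian G f x) / 2 := by
  have key : ∀ y ∈ G.neighborFinset x, 2 * (if f y = f x + 1 then 1 else 0) - 1 ≤ f y - f x := by
    intro y hy
    have := sub_le_one_of_adj hf ((G.mem_neighborFinset x y).1 hy).symm
    split_ifs with hy' <;> linarith
  have hsum := sum_le_sum key
  rw [sum_sub_distrib, ← mul_sum, sum_boole, sum_const, G.card_neighborFinset_eq_degree,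
    ← degree_mul_normalizedLaplacian] at hsum
  simp only [nsmul_eq_mul, mul_one] at hsum
  linarith

end LipschitzLaplacian

section LazyWalk

variable {V : Type*} [Fintype V] [DecidableEq V] {G : SimpleGraph V} [DecidableRel G.Adj]

lemma isProbMeasure_single (x : V) : IsProbMeasure (Pi.single x 1 : V → ℝ) :=
  ⟨fun v => by rw [Pi.single_apply]; split_ifs <;> norm_num, by simp⟩

lemma lazyWalk_apply (α : ℝ) (x v : V) :
    lazyWalk G α x v
      = α * (Pi.single x 1 : V → ℝ) v + (1 - α) / G.degree x * if G.Adj x v then 1 else 0 := by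
  rcases eq_or_ne v x with rfl | hv
  · simp [lazyWalk]
  · simp [lazyWalk, hv]

lemma sum_lazyWalk_mul {x : V} (hx : 0 < G.degree x) (α : ℝ) (f : V → ℝ) :
    ∑ v, lazyWalk G α x v * f v = f x + (1 - α) * normalizedLaplacian G f x := by
  have hdeg : (G.degree x : ℝ) ≠ 0 := by positivity
  simp only [lazyWalk_apply, add_mul, sum_add_distrib, mul_assoc, ← mul_sum, ite_mul, one_mul,
    zero_mul, ← sum_filter, ← G.neighborFinset_eq_filter, Pi.single_apply, filter_eq',
    mem_univ, if_true, sum_singleton]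
  rw [normalizedLaplacian, sum_sub_distrib, sum_const, G.card_neighborFinset_eq_degree,
    nsmul_eq_mul]
  field_simp
  ring

lemma isProbMeasure_lazyWalk {α : ℝ} (h0 : 0 ≤ α) (h1 : α ≤ 1) {x : V} (hx : 0 < G.degree x) :
    IsProbMeasure (lazyWalk G α x) := by
  refine ⟨fun v => ?_, ?_⟩
  · rw [lazyWalk_apply]
    have := (isProbMeasure_single x).1 v
    have : 0 ≤ 1 - α := by linarith
    positivity
  · simpa [normalizedLaplacian_const] using sum_lazyWalk_mul hx α fun _ => 1

lemma lazyWalk_eq_mix {α₁ : ℝ} (h₁ : α₁ < 1) (α₂ : ℝ) (x v : V) :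
    lazyWalk G α₂ x v = (1 - α₂) / (1 - α₁) * lazyWalk G α₁ x v
      + (1 - (1 - α₂) / (1 - α₁)) * (Pi.single x 1 : V → ℝ) v := by
  have : 1 - α₁ ≠ 0 := by linarith
  simp only [lazyWalk_apply]
  field_simp
  ring

end LazyWalk

lemma MonotoneOn.exists_tendsto_nhdsLT_of_Ico {α β : Type*} [LinearOrder α] [TopologicalSpace α]
    [OrderTopology α] [ConditionallyCompleteLinearOrder β] [TopologicalSpace β] [OrderTopology β]
    {f : α → β} {a b : α} (hab : a < b) (hf : MonotoneOn f (Set.Ico a b))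
    (hbdd : BddAbove (f '' Set.Ico a b)) : ∃ L, Tendsto f (𝓝[<] b) (𝓝 L) := by
  have hmem : ∀ x ∈ Set.Iio b, max a x ∈ Set.Ico a b := fun x hx => ⟨le_max_left _ _, max_lt hab hx⟩
  have hg : MonotoneOn (fun x => f (max a x)) (Set.Iio b) := fun x hx y hy hxy =>
    hf (hmem x hx) (hmem y hy) (max_le_max le_rfl hxy)
  have hgbdd : BddAbove ((fun x => f (max a x)) '' Set.Iio b) :=
    hbdd.mono (by rintro _ ⟨x, hx, rfl⟩; exact Set.mem_image_of_mem f (hmem x hx))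
  refine ⟨_, (hg.tendsto_nhdsLT hgbdd).congr' ?_⟩
  filter_upwards [Ico_mem_nhdsLT hab] with x hx
  rw [max_eq_right hx.1]

section Curvature

variable {V : Type*} [Fintype V] [DecidableEq V] {G : SimpleGraph V} [DecidableRel G.Adj]
  {x y : V}

lemma kappaAlpha_of_adj (h : G.Adj x y) (α : ℝ) :
    kappaAlpha G α x y
      = 1 - W (fun a b => (G.dist a b : ℝ)) (lazyWalk G α x) (lazyWalk G α y) := by
  rw [kappaAlpha, SimpleGraph.dist_eq_one_iff_adj.2 h, Nat.cast_one, div_one]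

lemma W_lazyWalk_le (h : G.Adj x y) {α₁ α₂ : ℝ} (h0 : 0 ≤ α₁) (h12 : α₁ ≤ α₂) (h2 : α₂ < 1) :
    W (fun a b => (G.dist a b : ℝ)) (lazyWalk G α₂ x) (lazyWalk G α₂ y)
      ≤ (1 - α₂) / (1 - α₁) * W (fun a b => (G.dist a b : ℝ)) (lazyWalk G α₁ x) (lazyWalk G α₁ y)
        + (1 - (1 - α₂) / (1 - α₁)) := by
  have h1 : α₁ < 1 := h12.trans_lt h2
  have hs : 0 < (1 - α₂) / (1 - α₁) := div_pos (by linarith) (by linarith)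
  have hs1 : 0 ≤ 1 - (1 - α₂) / (1 - α₁) := by
    rw [sub_nonneg, div_le_one (by linarith)]; linarith
  have hcost : ∑ p : V × V, (Pi.single x 1 : V → ℝ) p.1 * (Pi.single y 1 : V → ℝ) p.2
      * (G.dist p.1 p.2 : ℝ) = 1 := by
    simp [Fintype.sum_prod_type, Pi.single_apply, SimpleGraph.dist_eq_one_iff_adj.2 h]
  have key := W_mul_add_mul_le (fun a b => Nat.cast_nonneg (G.dist a b))
    (isProbMeasure_lazyWalk h0 h1.le (G.degree_pos_iff_exists_adj x |>.2 ⟨y, h⟩))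
    (isProbMeasure_lazyWalk h0 h1.le (G.degree_pos_iff_exists_adj y |>.2 ⟨x, h.symm⟩))
    ((isProbMeasure_single x).isCoupling_prod (isProbMeasure_single y)) hs hs1
  simp only [← lazyWalk_eq_mix h1, hcost, mul_one] at key
  exact key

lemma monotoneOn_kappaAlpha_div (h : G.Adj x y) :
    MonotoneOn (fun α => kappaAlpha G α x y / (1 - α)) (Set.Ico 0 1) := by
  intro α₁ ⟨h0, h1⟩ α₂ ⟨_, h2⟩ h12
  have hW := mul_le_mul_of_nonneg_right (W_lazyWalk_le h h0 h12 h2) (by linarith : 0 ≤ 1 - α₁)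
  have ht : (1 - α₂) / (1 - α₁) * (1 - α₁) = 1 - α₂ := div_mul_cancel₀ _ (by linarith)
  simp only [kappaAlpha_of_adj h]
  set w₁ := W (fun a b => (G.dist a b : ℝ)) (lazyWalk G α₁ x) (lazyWalk G α₁ y)
  rw [div_le_div_iff₀ (by linarith) (by linarith)]
  linear_combination hW - (1 - w₁) * ht

/-- `kappaLLY` is a `limUnder`, so a bound on it needs the limit to exist: here it does because
`κ_α/(1-α)` is monotone. -/
lemma kappaLLY_le_of_forall (h : G.Adj x y) {c : ℝ}
    (hc : ∀ α ∈ Set.Ico (0 : ℝ) 1, kappaAlpha G α x y / (1 - α) ≤ c) : kappaLLY G x y ≤ c := by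
  obtain ⟨L, hL⟩ := (monotoneOn_kappaAlpha_div h).exists_tendsto_nhdsLT_of_Ico one_pos
    ⟨c, Set.forall_mem_image.2 hc⟩
  rw [kappaLLY, nhdsWithin_Ico_eq_nhdsLT one_pos, hL.limUnder_eq]
  exact le_of_tendsto hL (mem_of_superset (Ico_mem_nhdsLT one_pos) hc)

lemma kappaLLY_le_normalizedLaplacian_sub (h : G.Adj x y) {f : V → ℝ}
    (hf : ∀ a b, f b - f a ≤ G.dist a b) (hxy : f y = f x + 1) :
    kappaLLY G x y ≤ normalizedLaplacian G f x - normalizedLaplacian G f y := by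
  refine kappaLLY_le_of_forall h fun α ⟨h0, h1⟩ => ?_
  have hdx : 0 < G.degree x := G.degree_pos_iff_exists_adj x |>.2 ⟨y, h⟩
  have hdy : 0 < G.degree y := G.degree_pos_iff_exists_adj y |>.2 ⟨x, h.symm⟩
  have hW := sub_le_W (isProbMeasure_lazyWalk h0 h1.le hdx) (isProbMeasure_lazyWalk h0 h1.le hdy) hf
  rw [sum_lazyWalk_mul hdx, sum_lazyWalk_mul hdy] at hW
  rw [kappaAlpha_of_adj h, div_le_iff₀ (by linarith)]
  linarith

end Curvature

lemma SimpleGraph.Walk.IsPath.sum_map_edges_le {V : Type*} [DecidableEq V] {G : SimpleGraph V}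
    [Fintype G.edgeSet] {u v : V} {p : G.Walk u v} (hp : p.IsPath) {g : Sym2 V → ℝ}
    (hg : ∀ e, 0 ≤ g e) : (p.edges.map g).sum ≤ ∑ e ∈ G.edgeFinset, g e := by
  rw [← List.sum_toFinset g hp.edges_nodup]
  exact sum_le_sum_of_subset_of_nonneg
    (fun e he => G.mem_edgeFinset.2 (p.edges_subset_edgeSet (List.mem_toFinset.1 he)))
    fun e _ _ => hg e

lemma SimpleGraph.Connected.dist_sub_dist_le {V : Type*} {G : SimpleGraph V} (hG : G.Connected)
    (x₀ a b : V) : (G.dist x₀ b : ℝ) - G.dist x₀ a ≤ G.dist a b := by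
  rw [sub_le_iff_le_add']
  exact_mod_cast hG.dist_triangle

lemma SimpleGraph.Connected.exists_adj_dist_eq {V : Type*} {G : SimpleGraph V} (hG : G.Connected)
    {x₀ y : V} {k : ℕ} (hy : G.dist x₀ y = k + 1) : ∃ z, G.Adj z y ∧ G.dist x₀ z = k := by
  obtain ⟨p, hp⟩ := hG.exists_walk_length_eq_dist y x₀
  rw [SimpleGraph.dist_comm, hy] at hp
  cases p with
  | nil => simp at hp
  | @cons _ z _ h q =>
    have hq : q.length = k := by simpa using hp
    refine ⟨z, h.symm, le_antisymm ?_ ?_⟩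
    · simpa [SimpleGraph.dist_comm, hq] using SimpleGraph.dist_le q
    · have := hG.dist_triangle (u := x₀) (v := z) (w := y)
      rw [SimpleGraph.dist_eq_one_iff_adj.2 h.symm] at this
      omega

section IntegralCurvature

variable {V : Type*} [Fintype V] [DecidableEq V] {G : SimpleGraph V} [DecidableRel G.Adj]

variable (G) in
noncomputable def curvatureDeficit (κ₀ : ℝ) : Sym2 V → ℝ :=
  Sym2.lift ⟨fun x y => max 0 (κ₀ - kappaLLY G x y),
    fun x y => by simp only []; rw [kappaLLY_symm]⟩

lemma ILLY_eq_sum_curvatureDeficit (κ₀ : ℝ) :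
    ILLY G κ₀ = ∑ e ∈ G.edgeFinset, curvatureDeficit G κ₀ e := rfl

lemma curvatureDeficit_nonneg (κ₀ : ℝ) (e : Sym2 V) : 0 ≤ curvatureDeficit G κ₀ e := by
  induction e using Sym2.ind with
  | _ a b => exact le_max_left _ _

lemma sub_curvatureDeficit_le (κ₀ : ℝ) (x y : V) :
    κ₀ - curvatureDeficit G κ₀ s(x, y) ≤ kappaLLY G x y := by
  have : κ₀ - kappaLLY G x y ≤ curvatureDeficit G κ₀ s(x, y) := le_max_right _ _
  linarith

/-- Being 1-Lipschitz, `f` rises by exactly one along every edge of `p`, so the bounds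
`kappaLLY_le_normalizedLaplacian_sub` telescope. -/
lemma length_mul_sub_sum_curvatureDeficit_le {f : V → ℝ} (hf : ∀ a b, f b - f a ≤ G.dist a b)
    (κ₀ : ℝ) {u v : V} (p : G.Walk u v) (hp : f v = f u + p.length) :
    p.length * κ₀ - (p.edges.map (curvatureDeficit G κ₀)).sum
      ≤ normalizedLaplacian G f u - normalizedLaplacian G f v := by
  induction p with
  | nil => simp
  | @cons u w v h q ih =>
    have hqv : f v - f w ≤ q.length := (hf w v).trans (mod_cast SimpleGraph.dist_le q)
    have huw := sub_le_one_of_adj hf h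
    simp only [SimpleGraph.Walk.length_cons, Nat.cast_succ] at hp
    have hcurv := kappaLLY_le_normalizedLaplacian_sub h hf (by linarith)
    have hrest := ih (by linarith)
    have hdef := sub_curvatureDeficit_le (G := G) κ₀ u w
    simp only [SimpleGraph.Walk.length_cons, SimpleGraph.Walk.edges_cons, List.map_cons,
      List.sum_cons, Nat.cast_succ]
    linarith

lemma normalizedLaplacian_dist_le (hG : G.Connected) (κ₀ : ℝ) (x₀ y : V) :
    normalizedLaplacian G (fun v => (G.dist x₀ v : ℝ)) y
      ≤ 1 + ILLY G κ₀ - G.dist x₀ y * κ₀ := by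
  have hf := hG.dist_sub_dist_le x₀
  obtain ⟨p, hp, hlen⟩ := hG.exists_path_of_dist x₀ y
  have hchain := length_mul_sub_sum_curvatureDeficit_le hf κ₀ p (by simp [hlen])
  have hI := hp.sum_map_edges_le (curvatureDeficit_nonneg (G := G) κ₀)
  have hx₀ := normalizedLaplacian_le_one hf x₀
  rw [hlen] at hchain
  rw [ILLY_eq_sum_curvatureDeficit]
  linarith

lemma one_add_ILLY_sub_div_two_nonneg (hG : G.Connected) (κ₀ : ℝ) {x₀ y : V} {k : ℕ}
    (hy : G.dist x₀ y = k) : 0 ≤ 1 + (ILLY G κ₀ - k * κ₀) / 2 := by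
  have := normalizedLaplacian_dist_le hG κ₀ x₀ y
  have := neg_one_le_normalizedLaplacian (hG.dist_sub_dist_le x₀) y
  rw [hy] at *
  linarith

end IntegralCurvature

section Spheres

variable {V : Type*} [Fintype V] {G : SimpleGraph V}

variable (G) in
noncomputable def distSphere (x₀ : V) (k : ℕ) : Finset V :=
  univ.filter fun v => G.dist x₀ v = k

lemma mem_distSphere {x₀ v : V} {k : ℕ} : v ∈ distSphere G x₀ k ↔ G.dist x₀ v = k := by
  simp [distSphere]

lemma card_eq_one_add_sum_card_distSphere (hG : G.Connected) {x₀ : V} {D : ℕ}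
    (hD : ∀ v, G.dist x₀ v ≤ D) :
    (Fintype.card V : ℝ) = 1 + ∑ k ∈ Icc 1 D, (#(distSphere G x₀ k) : ℝ) := by
  have hsplit : Fintype.card V = ∑ k ∈ range (D + 1), #(distSphere G x₀ k) :=
    card_eq_sum_card_fiberwise fun v _ => mem_range.2 (Nat.lt_succ_of_le (hD v))
  have hzero : distSphere G x₀ 0 = {x₀} := by
    ext v
    rw [mem_distSphere, hG.dist_eq_zero_iff, mem_singleton, eq_comm]
  rw [hsplit, range_eq_Ico, sum_eq_sum_Ico_succ_bot (Nat.succ_pos D), hzero, card_singleton]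
  push_cast
  rfl

variable [DecidableRel G.Adj]

lemma card_distSphere_one_le (x₀ : V) :
    (#(distSphere G x₀ 1) : ℝ) ≤ (univ.sup fun v => G.degree v : ℕ) := by
  have hsub : distSphere G x₀ 1 ⊆ G.neighborFinset x₀ := fun v hv => by
    simpa using mem_distSphere.1 hv
  exact_mod_cast (card_le_card hsub).trans
    (G.card_neighborFinset_eq_degree x₀ ▸ le_sup (f := fun v => G.degree v) (mem_univ x₀))

variable [DecidableEq V]

lemma distSphere_succ_subset (hG : G.Connected) (x₀ : V) (k : ℕ) :
    distSphere G x₀ (k + 1) ⊆ (distSphere G x₀ k).biUnion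
      fun y => {w ∈ G.neighborFinset y | G.dist x₀ w = k + 1} := by
  intro v hv
  obtain ⟨z, hzv, hz⟩ := hG.exists_adj_dist_eq (mem_distSphere.1 hv)
  exact mem_biUnion.2 ⟨z, mem_distSphere.2 hz,
    mem_filter.2 ⟨(G.mem_neighborFinset z v).2 hzv, mem_distSphere.1 hv⟩⟩

lemma distSphere_nonempty (hG : G.Connected) {x₀ y : V} {k : ℕ} (hk : k ≤ G.dist x₀ y) :
    (distSphere G x₀ k).Nonempty := by
  obtain ⟨m, hm⟩ := Nat.exists_eq_add_of_le hk
  induction m generalizing k with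
  | zero => exact ⟨y, mem_distSphere.2 hm⟩
  | succ m ih =>
    obtain ⟨v, hv⟩ := ih (k := k + 1) (by omega) (by omega)
    obtain ⟨z, hz, -⟩ := mem_biUnion.1 (distSphere_succ_subset hG x₀ k hv)
    exact ⟨z, hz⟩

lemma card_distSphere_succ_le (hG : G.Connected) (κ₀ : ℝ) (x₀ : V) (k : ℕ) :
    (#(distSphere G x₀ (k + 1)) : ℝ) ≤ #(distSphere G x₀ k)
      * ((univ.sup fun v => G.degree v : ℕ) * (1 + (ILLY G κ₀ - k * κ₀) / 2)) := by
  have hout : ∀ y ∈ distSphere G x₀ k, (#{w ∈ G.neighborFinset y | G.dist x₀ w = k + 1} : ℝ)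
      ≤ (univ.sup fun v => G.degree v : ℕ) * (1 + (ILLY G κ₀ - k * κ₀) / 2) := by
    intro y hy
    have hyk := mem_distSphere.1 hy
    have hcount := card_filter_le_normalizedLaplacian (hG.dist_sub_dist_le x₀) y
    have hΔ := normalizedLaplacian_dist_le hG κ₀ x₀ y
    have hF := one_add_ILLY_sub_div_two_nonneg hG κ₀ hyk
    have hdeg : (G.degree y : ℝ) ≤ (univ.sup fun v => G.degree v : ℕ) :=
      mod_cast le_sup (f := fun v => G.degree v) (mem_univ y)
    have hfilter : {w ∈ G.neighborFinset y | G.dist x₀ w = k + 1}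
        = {w ∈ G.neighborFinset y | (G.dist x₀ w : ℝ) = G.dist x₀ y + 1} :=
      filter_congr fun w _ => by rw [hyk]; norm_cast
    rw [hyk] at hΔ
    rw [hfilter]
    calc _ ≤ (G.degree y : ℝ) * (1 + normalizedLaplacian G (fun v => (G.dist x₀ v : ℝ)) y) / 2 :=
          hcount
      _ ≤ G.degree y * (1 + (ILLY G κ₀ - k * κ₀) / 2) := by
          rw [mul_div_assoc]; gcongr; linarith
      _ ≤ _ := by gcongr
  calc (#(distSphere G x₀ (k + 1)) : ℝ)
      ≤ ∑ y ∈ distSphere G x₀ k, (#{w ∈ G.neighborFinset y | G.dist x₀ w = k + 1} : ℝ) :=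
        mod_cast (card_le_card (distSphere_succ_subset hG x₀ k)).trans card_biUnion_le
    _ ≤ _ := (sum_le_sum hout).trans_eq (by rw [sum_const, nsmul_eq_mul])

end Spheres

lemma le_pow_mul_prod_of_le_mul {a b : ℕ → ℝ} {c : ℝ} {n : ℕ} (hc : 0 ≤ c)
    (hb : ∀ i, 1 ≤ i → i < n → 0 ≤ b i) (h₁ : a 1 ≤ c)
    (hsucc : ∀ i, 1 ≤ i → i < n → a (i + 1) ≤ a i * (c * b i)) {k : ℕ} (hk : 1 ≤ k)
    (hkn : k ≤ n) : a k ≤ c ^ k * ∏ i ∈ Icc 1 (k - 1), b i := by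
  induction k, hk using Nat.le_induction with
  | base => simpa using h₁
  | succ k hk ih =>
    calc a (k + 1) ≤ a k * (c * b k) := hsucc k hk hkn
      _ ≤ (c ^ k * ∏ i ∈ Icc 1 (k - 1), b i) * (c * b k) :=
          mul_le_mul_of_nonneg_right (ih (by omega)) (mul_nonneg hc (hb k hk hkn))
      _ = c ^ (k + 1) * ∏ i ∈ Icc 1 (k + 1 - 1), b i := by
          obtain ⟨j, rfl⟩ := Nat.exists_eq_add_of_le' hk
          rw [Nat.add_sub_cancel, Nat.add_sub_cancel, prod_Icc_succ_top (by omega), pow_succ]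
          ring

/-- Moore-type bound with integral Lin–Lu–Yau Ricci curvature, in terms of the diameter. -/
theorem stmt_10 {V : Type*} [Fintype V] [DecidableEq V] (G : SimpleGraph V)
    [DecidableRel G.Adj] (hG : G.Connected) (κ₀ : ℝ) :
    (Fintype.card V : ℝ) ≤
      1 + ∑ k ∈ Finset.Icc 1 (gDiam G),
        (((Finset.univ.sup fun v => G.degree v) : ℕ) : ℝ) ^ k *
          ∏ i ∈ Finset.Icc 1 (k - 1), (1 + (ILLY G κ₀ - (i : ℝ) * κ₀) / 2) := by
  have : Nonempty V := hG.nonempty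
  -- centring the spheres at an end of a diametral pair makes each factor of the product
  -- nonnegative, as then every sphere of radius at most `gDiam G` is nonempty
  obtain ⟨⟨x₀, y₀⟩, -, hdiam⟩ :=
    exists_mem_eq_sup univ univ_nonempty fun p : V × V => G.dist p.1 p.2
  have hecc : ∀ v, G.dist x₀ v ≤ gDiam G := fun v =>
    le_sup (f := fun p : V × V => G.dist p.1 p.2) (mem_univ (x₀, v))
  rw [card_eq_one_add_sum_card_distSphere hG hecc]
  gcongr with k hk
  refine le_pow_mul_prod_of_le_mul (a := fun k => (#(distSphere G x₀ k) : ℝ))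
    (Nat.cast_nonneg _) (fun i _ hi => ?_) (card_distSphere_one_le x₀)
    (fun i _ _ => card_distSphere_succ_le hG κ₀ x₀ i) (mem_Icc.1 hk).1 (mem_Icc.1 hk).2
  obtain ⟨y, hy⟩ := distSphere_nonempty hG (y := y₀) (hi.le.trans_eq hdiam)
  exact one_add_ILLY_sub_div_two_nonneg hG κ₀ (mem_distSphere.1 hy)
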